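/- As p → ∞, Z(p+1) ~ t·12^p·p^{-5/2} where t = √3/(8√π). -/

import Mathlib

open Asymptotics Filter

/-- `Z(1) = (2-√3)/4` and `Z(p) = 6^p·(2p-5)!!/(8√3·p!)` for `p ≥ 2`. -/
noncomputable def Zfun : ℕ → ℝ := fun p =>
  if p = 1 then (2 - Real.sqrt 3) / 4
  else 6 ^ p * Nat.doubleFactorial (2 * p - 5) / (8 * Real.sqrt 3 * Nat.factorial p)

/-!
For `p ≥ 2` write `p = n + 2`. Since `(2n)! = 2ⁿ n! (2n-1)‼`, the double factorial is
`n! · C(2n, n) / 2ⁿ`, so `Z(n+2) = (3√3/2) · 3ⁿ · C(2n, n) / ((n+1)(n+2))`. Stirling's formula gives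
`C(2n, n) ~ 4ⁿ / √(πn)`, hence `Z(n+2) ~ (3√3/(2√π)) · 12ⁿ · n^{-5/2}`, and shifting `n ↦ n + 1`
only changes the polynomial factor by a factor tending to `1`.
-/

open Nat Real

theorem Nat.centralBinom_mul_factorial_mul_factorial (n : ℕ) :
    centralBinom n * n ! * n ! = (2 * n)! := by
  have h := choose_mul_factorial_mul_factorial (by omega : n ≤ 2 * n)
  rwa [show 2 * n - n = n by omega, ← centralBinom_eq_two_mul_choose] at h

-- At `n = 0` the truncated `2 * n - 1` is `0`, and `0‼ = 1` plays the role of `(-1)‼`.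
theorem Nat.two_pow_mul_doubleFactorial_two_mul_sub_one (n : ℕ) :
    2 ^ n * (2 * n - 1)‼ = n ! * centralBinom n := by
  cases n with
  | zero => rfl
  | succ n =>
    have hfact : (2 * (n + 1))! = 2 ^ (n + 1) * (n + 1)! * (2 * n + 1)‼ := by
      rw [show 2 * (n + 1) = 2 * n + 1 + 1 by ring, factorial_eq_mul_doubleFactorial,
        show 2 * n + 1 + 1 = 2 * (n + 1) by ring, doubleFactorial_two_mul]
    rw [show 2 * (n + 1) - 1 = 2 * n + 1 by omega]
    apply Nat.eq_of_mul_eq_mul_right (factorial_pos (n + 1))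
    linarith [hfact, centralBinom_mul_factorial_mul_factorial (n + 1)]

theorem Zfun_add_two (n : ℕ) :
    Zfun (n + 2) = 3 * √3 / 2 * 3 ^ n * centralBinom n / ((n + 1) * (n + 2)) := by
  have hdf : ((2 * n - 1)‼ : ℝ) = n ! * centralBinom n / 2 ^ n := by
    rw [eq_div_iff (by positivity), mul_comm]
    exact_mod_cast two_pow_mul_doubleFactorial_two_mul_sub_one n
  have hfact : ((n + 2)! : ℝ) = (n + 1) * (n + 2) * n ! := by
    push_cast [factorial_succ]; ring
  have h6 : (6 : ℝ) ^ (n + 2) = 36 * 2 ^ n * 3 ^ n := by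
    rw [pow_add, show (6 : ℝ) = 2 * 3 by norm_num, mul_pow]
    ring
  rw [Zfun, if_neg (by omega), show 2 * (n + 2) - 5 = 2 * n - 1 by omega, hdf, hfact, h6]
  field_simp
  rw [sq_sqrt (by norm_num)]
  ring

theorem Nat.centralBinom_isEquivalent :
    (fun n : ℕ ↦ (centralBinom n : ℝ)) ~[atTop] fun n ↦ 4 ^ n / √(π * n) := by
  have htwo : Tendsto (fun n : ℕ ↦ 2 * n) atTop atTop := tendsto_id.const_mul_atTop' two_pos
  have h := (Stirling.factorial_isEquivalent_stirling.comp_tendsto htwo).div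
    (Stirling.factorial_isEquivalent_stirling.mul Stirling.factorial_isEquivalent_stirling)
  refine (h.congr_left (Eventually.of_forall fun n ↦ ?_)).congr_right
    (Eventually.of_forall fun n ↦ ?_)
  · simp only [Function.comp, Pi.div_apply, Pi.mul_apply]
    rw [div_eq_iff (by positivity), ← centralBinom_mul_factorial_mul_factorial]
    push_cast
    ring
  · simp only [Function.comp, Pi.div_apply, Pi.mul_apply]
    push_cast
    have hsqrt_four : √(2 * (2 * n) * π) = 2 * √(π * n) := by
      rw [show 2 * (2 * (n : ℝ)) * π = 2 ^ 2 * (π * n) by ring, sqrt_mul (by norm_num),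
        sqrt_sq (by norm_num)]
    have hsqrt_two : √(2 * n * π) = √2 * √(π * n) := by
      rw [← sqrt_mul (by norm_num)]
      ring_nf
    have hpow : (2 * (n : ℝ) / rexp 1) ^ (2 * n) = 4 ^ n * ((n / rexp 1) ^ n) ^ 2 := by
      rw [pow_mul]
      ring
    rw [hsqrt_four, hsqrt_two, hpow]
    field_simp
    rw [sq_sqrt (by norm_num)]

theorem isEquivalent_natCast_add (a : ℝ) :
    (fun n : ℕ ↦ (n : ℝ) + a) ~[atTop] fun n ↦ (n : ℝ) :=
  IsEquivalent.refl.add_const_of_norm_tendsto_atTop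
    (tendsto_norm_atTop_atTop.comp tendsto_natCast_atTop_atTop)

theorem isEquivalent_natCast_add_rpow (a r : ℝ) :
    (fun n : ℕ ↦ ((n : ℝ) + a) ^ r) ~[atTop] fun n ↦ (n : ℝ) ^ r :=
  (isEquivalent_natCast_add a).rpow fun n ↦ n.cast_nonneg

theorem Zfun_add_two_isEquivalent :
    (fun n : ℕ ↦ Zfun (n + 2)) ~[atTop]
      fun n ↦ 3 * √3 / (2 * √π) * 12 ^ n * (n : ℝ) ^ (-(5 / 2) : ℝ) := by
  have h := ((IsEquivalent.refl (u := fun n : ℕ ↦ 3 * √3 / 2 * 3 ^ n)).mul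
    centralBinom_isEquivalent).div ((isEquivalent_natCast_add 1).mul (isEquivalent_natCast_add 2))
  refine (h.congr_left (Eventually.of_forall fun n ↦ (Zfun_add_two n).symm)).congr_right ?_
  filter_upwards [eventually_gt_atTop 0] with n hn
  have hn' : (0 : ℝ) < n := by exact_mod_cast hn
  have h52 : (n : ℝ) ^ (-(5 / 2) : ℝ) = ((n : ℝ) ^ 2 * √n)⁻¹ := by
    rw [rpow_neg hn'.le, show (5 / 2 : ℝ) = 2 + 1 / 2 by norm_num, rpow_add hn', rpow_two,
      sqrt_eq_rpow]
  simp only [Pi.div_apply, Pi.mul_apply]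
  rw [h52, sqrt_mul pi_pos.le, show (12 : ℝ) ^ n = 3 ^ n * 4 ^ n by rw [← mul_pow]; norm_num]
  field_simp

/-- As `p → ∞`, `Z(p+1) ~ t·12^p·p^{-5/2}` with `t = √3/(8√π)`. -/
theorem Z_asymptotic :
    (fun p : ℕ => Zfun (p + 1)) ~[atTop]
      (fun p : ℕ =>
        Real.sqrt 3 / (8 * Real.sqrt Real.pi) * 12 ^ p * (p : ℝ) ^ (-(5 / 2) : ℝ)) := by
  have hshift : (fun n : ℕ ↦ √3 / (8 * √π) * 12 ^ (n + 1) * ((n + 1 : ℕ) : ℝ) ^ (-(5 / 2) : ℝ))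
      ~[atTop] fun n ↦ 3 * √3 / (2 * √π) * 12 ^ n * (n : ℝ) ^ (-(5 / 2) : ℝ) := by
    refine (IsEquivalent.refl.mul (isEquivalent_natCast_add_rpow 1 _)).congr_left
      (Eventually.of_forall fun n ↦ ?_)
    simp only [Pi.mul_apply]
    push_cast
    ring
  rw [← map_add_atTop_eq_nat 1, isEquivalent_map]
  exact Zfun_add_two_isEquivalent.trans hshift.symm
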